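/- arXiv:2012.14300 — 5 statements merged into one kernel-verified Lean document; each statement's English description precedes it below -/
import Mathlib

section
/- Let G be a graph and let A, B, C be pairwise disjoint subsets of its vertices such that the bipartite graphs induced between A and B and between B and C are both biregular (every vertex of A has the same degree into B, every vertex of B has the same degree into A, and similarly for B and C) and neither is edgeless. If |A| = |C| = m ≤ |B|, then there are m pairwise vertex-disjoint paths from A to C in the subgraph induced on A ∪ B ∪ C. -/
/-
Consider the Hall system on `A ⊔ B` with values in `B ∪ C` in which `a ∈ A` may be matched to
any neighbour in `B`, and `b ∈ B` to itself or to any neighbour in `C`. An injective choice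
sends each `a` to some `φ a ∈ B`; then `φ a` is not matched to itself, hence to a neighbour
`ψ a ∈ C`, and the paths `a, φ a, ψ a` are disjoint.

Hall's condition comes from double counting: in a biregular bipartite graph between `S` and `T`,
every `X ⊆ S` has at least `|X| |T| / |S|` neighbours. So `X ⊆ A` has at least `|X|` neighbours
in `B`, and `Y ⊆ B` at least `|Y| |A| / |B|` neighbours in `C`. These bounds give
`|X| + |Y| ≤ max (|N X|, |Y|) + |N Y|`, and the right side counts values available to `X ⊔ Y`.
-/

open SimpleGraph Finset Function

def IsBiregular {α β : Type*} (r : α → β → Prop) [∀ a b, Decidable (r a b)]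
    (s : Finset α) (t : Finset β) (d₁ d₂ : ℕ) : Prop :=
  (∀ a ∈ s, #(t.bipartiteAbove r a) = d₁) ∧ ∀ b ∈ t, #(s.bipartiteBelow r b) = d₂

namespace IsBiregular

variable {α β : Type*} {r : α → β → Prop} [∀ a b, Decidable (r a b)]
  {s : Finset α} {t : Finset β} {d₁ d₂ : ℕ}

theorem pos_right (h : IsBiregular r s t d₁ d₂) {a : α} {b : β} (ha : a ∈ s) (hb : b ∈ t)
    (hab : r a b) : 0 < d₂ :=
  h.2 b hb ▸ card_pos.mpr ⟨a, mem_filter.mpr ⟨ha, hab⟩⟩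

theorem card_mul_card_le [DecidableEq β] (h : IsBiregular r s t d₁ d₂) (hd₂ : 0 < d₂)
    {S : Finset α} (hS : S ⊆ s) :
    #S * #t ≤ #(S.biUnion (fun a => t.bipartiteAbove r a)) * #s := by
  set N := S.biUnion (fun a => t.bipartiteAbove r a)
  have hlocal : #S * d₁ ≤ #N * d₂ := by
    refine card_mul_le_card_mul r (fun a ha => (h.1 a (hS ha)).ge.trans (card_le_card ?_))
      (fun b hb => (card_le_card (filter_subset_filter _ hS)).trans (h.2 b ?_).le)
    · intro b hb
      exact mem_filter.mpr ⟨mem_biUnion.mpr ⟨a, ha, hb⟩, (mem_filter.mp hb).2⟩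
    · obtain ⟨a, -, hb⟩ := mem_biUnion.mp hb
      exact (mem_filter.mp hb).1
  have hglobal : #s * d₁ = #t * d₂ := card_mul_eq_card_mul r h.1 h.2
  refine Nat.le_of_mul_le_mul_right ?_ hd₂
  calc #S * #t * d₂ = #s * (#S * d₁) := by rw [mul_assoc, ← hglobal]; ring
    _ ≤ #s * (#N * d₂) := Nat.mul_le_mul_left _ hlocal
    _ = #N * #s * d₂ := by ring

end IsBiregular

theorem SimpleGraph.isBiregular_adj {V : Type*} (G : SimpleGraph V) [DecidableRel G.Adj]
    {s t : Finset V} {d₁ d₂ : ℕ} (h₁ : ∀ a ∈ s, #(t.filter (fun b => G.Adj a b)) = d₁)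
    (h₂ : ∀ b ∈ t, #(s.filter (fun a => G.Adj b a)) = d₂) :
    IsBiregular G.Adj s t d₁ d₂ :=
  ⟨h₁, fun b hb => by simpa only [bipartiteBelow, G.adj_comm] using h₂ b hb⟩

theorem add_le_max_add_of_mul_le_mul {s t P Q a b c : ℕ} (hs : s ≤ a) (hab : a ≤ b)
    (hac : a ≤ c) (hP : s * b ≤ P * a) (hQ : t * c ≤ Q * b) : s + t ≤ max P t + Q := by
  have hQ' : t * a ≤ Q * b := (Nat.mul_le_mul_left t hac).trans hQ
  rcases Nat.eq_zero_or_pos a with rfl | ha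
  · omega
  -- if `t * a ≤ s * b` then `(b - a) * (s * b - t * a) ≥ 0` gives `s + t ≤ P + Q`
  rcases le_or_gt (t * a) (s * b) with hts | hst
  · have : (s + t) * (a * b) ≤ (P + Q) * (a * b) := by nlinarith
    have := Nat.le_of_mul_le_mul_right this (Nat.mul_pos ha (ha.trans_le hab))
    omega
  · have : s < Q := Nat.lt_of_mul_lt_mul_right (hst.trans_le hQ')
    omega

section Linkage

variable {V : Type*} [DecidableEq V] {r : V → V → Prop} [DecidableRel r] {A B C : Finset V}
  {d₁ d₂ e₁ e₂ : ℕ}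

variable (r A B C) in
def linkageHallSystem : A ⊕ B → Finset V :=
  Sum.elim (fun a => B.bipartiteAbove r a) (fun b => insert b.1 (C.bipartiteAbove r b))

theorem card_le_card_biUnion_linkageHallSystem (hBC : Disjoint B C)
    (hregAB : IsBiregular r A B d₁ d₂) (hregBC : IsBiregular r B C e₁ e₂) (hd₂ : 0 < d₂)
    (he₂ : 0 < e₂) (hAB : #A ≤ #B) (hAC : #A ≤ #C) (s : Finset (A ⊕ B)) :
    #s ≤ #(s.biUnion (linkageHallSystem r A B C)) := by
  set SA := s.toLeft.map (Embedding.subtype (· ∈ A))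
  set SB := s.toRight.map (Embedding.subtype (· ∈ B))
  set NB := SA.biUnion (fun a => B.bipartiteAbove r a)
  set NC := SB.biUnion (fun b => C.bipartiteAbove r b)
  have hSA : SA ⊆ A := fun _ hx => by obtain ⟨a, -, rfl⟩ := mem_map.mp hx; exact a.2
  have hSB : SB ⊆ B := fun _ hx => by obtain ⟨b, -, rfl⟩ := mem_map.mp hx; exact b.2
  have hNB : NB ⊆ B := biUnion_subset.mpr fun _ _ => filter_subset _ _
  have hNC : NC ⊆ C := biUnion_subset.mpr fun _ _ => filter_subset _ _
  have hcover : NB ∪ SB ∪ NC ⊆ s.biUnion (linkageHallSystem r A B C) := by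
    intro x hx
    simp only [union_assoc, mem_union, mem_biUnion, mem_map, mem_toLeft, Embedding.subtype_apply,
      Subtype.exists, exists_and_right, exists_eq_right, mem_bipartiteAbove, mem_toRight,
      linkageHallSystem, Sum.exists, Sum.elim_inl, Sum.elim_inr, mem_insert, NB, SA, SB,
      NC] at hx ⊢
    rcases hx with hx | ⟨hxB, hxs⟩ | ⟨b, hb, hxC⟩
    exacts [.inl hx, .inr ⟨x, ⟨hxB, hxs⟩, .inl rfl⟩, .inr ⟨b, hb, .inr hxC⟩]
  calc #s = #SA + #SB := by simp [SA, SB, card_toLeft_add_card_toRight]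
    _ ≤ max #NB #SB + #NC :=
      add_le_max_add_of_mul_le_mul (card_le_card hSA) hAB hAC (hregAB.card_mul_card_le hd₂ hSA)
        (hregBC.card_mul_card_le he₂ hSB)
    _ ≤ #(NB ∪ SB) + #NC := by
      gcongr; exact max_le (card_le_card subset_union_left) (card_le_card subset_union_right)
    _ = #(NB ∪ SB ∪ NC) :=
      (card_union_of_disjoint ((hBC.mono_left (union_subset hNB hSB)).mono_right hNC)).symm
    _ ≤ _ := card_le_card hcover

theorem exists_injective_two_step_linkage (hBC : Disjoint B C)
    (hregAB : IsBiregular r A B d₁ d₂) (hregBC : IsBiregular r B C e₁ e₂) (hd₂ : 0 < d₂)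
    (he₂ : 0 < e₂) (hAB : #A ≤ #B) (hAC : #A ≤ #C) :
    ∃ φ ψ : A → V, Injective φ ∧ Injective ψ ∧
      ∀ a, φ a ∈ B ∧ r a (φ a) ∧ ψ a ∈ C ∧ r (φ a) (ψ a) := by
  obtain ⟨f, hf, hft⟩ := (all_card_le_biUnion_card_iff_exists_injective _).mp
    (card_le_card_biUnion_linkageHallSystem hBC hregAB hregBC hd₂ he₂ hAB hAC)
  have hφ (a : A) : f (.inl a) ∈ B ∧ r a (f (.inl a)) := mem_filter.mp (hft (.inl a))
  let φ : A → B := fun a => ⟨f (.inl a), (hφ a).1⟩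
  have hφ_inj : Injective φ := fun a a' h => hf.comp Sum.inl_injective (congrArg Subtype.val h)
  have hψ (a : A) : f (.inr (φ a)) ∈ C ∧ r (φ a) (f (.inr (φ a))) := by
    have hne : f (.inr (φ a)) ≠ f (.inl a) := hf.ne Sum.inr_ne_inl
    exact mem_filter.mp ((mem_insert.mp (hft (.inr (φ a)))).resolve_left hne)
  exact ⟨fun a => φ a, fun a => f (.inr (φ a)), Subtype.val_injective.comp hφ_inj,
    hf.comp (Sum.inr_injective.comp hφ_inj), fun a => ⟨(hφ a).1, (hφ a).2, hψ a⟩⟩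

end Linkage

theorem SimpleGraph.exists_disjoint_paths_of_adj_adj {V ι : Type*} {G : SimpleGraph V}
    {A B C : Set V} (hAB : Disjoint A B) (hAC : Disjoint A C) (hBC : Disjoint B C)
    {x y z : ι → V} (hx : Injective x) (hy : Injective y) (hz : Injective z)
    (hxA : ∀ i, x i ∈ A) (hyB : ∀ i, y i ∈ B) (hzC : ∀ i, z i ∈ C)
    (hxy : ∀ i, G.Adj (x i) (y i)) (hyz : ∀ i, G.Adj (y i) (z i)) :
    ∃ p : ∀ i, G.Walk (x i) (z i), (∀ i, (p i).IsPath) ∧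
      (∀ i, ∀ v ∈ (p i).support, v ∈ A ∪ B ∪ C) ∧
      (∀ i j, i ≠ j → ∀ v, v ∈ (p i).support → v ∉ (p j).support) := by
  refine ⟨fun i => .cons (hxy i) (.cons (hyz i) .nil), fun i => ?_, fun i v hv => ?_,
    fun i j hij v hvi hvj => ?_⟩
  · have hxz : x i ≠ z i := hAC.ne_of_mem (hxA i) (hzC i)
    simp [Walk.isPath_def, (hxy i).ne, (hyz i).ne, hxz]
  · simp only [Walk.support_cons, Walk.support_nil, List.mem_cons, List.not_mem_nil,
      or_false] at hv
    rcases hv with rfl | rfl | rfl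
    exacts [.inl (.inl (hxA i)), .inl (.inr (hyB i)), .inr (hzC i)]
  · simp only [Walk.support_cons, Walk.support_nil, List.mem_cons, List.not_mem_nil,
      or_false] at hvi hvj
    rcases hvi with rfl | rfl | rfl <;> rcases hvj with h | h | h
    exacts [hij (hx h), hAB.ne_of_mem (hxA i) (hyB j) h, hAC.ne_of_mem (hxA i) (hzC j) h,
      hAB.ne_of_mem (hxA j) (hyB i) h.symm, hij (hy h), hBC.ne_of_mem (hyB i) (hzC j) h,
      hAC.ne_of_mem (hxA j) (hzC i) h.symm, hBC.ne_of_mem (hyB j) (hzC i) h.symm, hij (hz h)]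

theorem stmt_0_general {V : Type*} [DecidableEq V] (G : SimpleGraph V)
    [DecidableRel G.Adj] (A B C : Finset V) (m : ℕ)
    (hAB : Disjoint A B) (hAC : Disjoint A C) (hBC : Disjoint B C)
    (hbiAB : ∃ d₁ d₂ : ℕ, (∀ a ∈ A, (B.filter (fun b => G.Adj a b)).card = d₁) ∧
      (∀ b ∈ B, (A.filter (fun a => G.Adj b a)).card = d₂))
    (hbiBC : ∃ d₁ d₂ : ℕ, (∀ b ∈ B, (C.filter (fun c => G.Adj b c)).card = d₁) ∧
      (∀ c ∈ C, (B.filter (fun b => G.Adj c b)).card = d₂))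
    (hABne : ∃ a ∈ A, ∃ b ∈ B, G.Adj a b)
    (hBCne : ∃ b ∈ B, ∃ c ∈ C, G.Adj b c)
    (hA : A.card = m) (hC : C.card = m) (hm : m ≤ B.card) :
    ∃ (s t : Fin m → V) (p : ∀ i, G.Walk (s i) (t i)),
      (∀ i, s i ∈ A) ∧ (∀ i, t i ∈ C) ∧
      (∀ i, (p i).IsPath) ∧
      (∀ i, ∀ v ∈ (p i).support, v ∈ A ∪ B ∪ C) ∧
      (∀ i j, i ≠ j → ∀ v, v ∈ (p i).support → v ∉ (p j).support) := by
  obtain ⟨d₁, d₂, hAB₁, hAB₂⟩ := hbiAB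
  obtain ⟨e₁, e₂, hBC₁, hBC₂⟩ := hbiBC
  have hregAB := G.isBiregular_adj hAB₁ hAB₂
  have hregBC := G.isBiregular_adj hBC₁ hBC₂
  obtain ⟨a₀, ha₀, b₀, hb₀, hab₀⟩ := hABne
  obtain ⟨b₁, hb₁, c₁, hc₁, hbc₁⟩ := hBCne
  obtain ⟨φ, ψ, hφ, hψ, hlink⟩ := exists_injective_two_step_linkage hBC hregAB hregBC
    (hregAB.pos_right ha₀ hb₀ hab₀) (hregBC.pos_right hb₁ hc₁ hbc₁) (hA ▸ hm)
    (hA.trans hC.symm).le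
  let σ : Fin m ≃ A := (A.equivFinOfCardEq hA).symm
  obtain ⟨p, hpath, hmem, hdisj⟩ := exists_disjoint_paths_of_adj_adj
    (disjoint_coe.2 hAB) (disjoint_coe.2 hAC) (disjoint_coe.2 hBC)
    (Subtype.val_injective.comp σ.injective) (hφ.comp σ.injective) (hψ.comp σ.injective)
    (fun i => (σ i).2) (fun i => (hlink (σ i)).1) (fun i => (hlink (σ i)).2.2.1)
    (fun i => (hlink (σ i)).2.1) (fun i => (hlink (σ i)).2.2.2)
  exact ⟨_, _, p, fun i => (σ i).2, fun i => (hlink (σ i)).2.2.1, hpath,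
    fun i v hv => by simpa [or_assoc] using hmem i v hv, hdisj⟩

/-- If `A`, `B`, `C` are pairwise disjoint vertex sets such that `G[A,B]` and
`G[B,C]` are biregular and not edgeless, and `|A| = |C| = m ≤ |B|`, then there are `m`
pairwise vertex-disjoint paths from `A` to `C` inside `A ∪ B ∪ C`. -/
theorem stmt_0 {V : Type*} [Fintype V] [DecidableEq V] (G : SimpleGraph V)
    [DecidableRel G.Adj] (A B C : Finset V) (m : ℕ)
    (hAB : Disjoint A B) (hAC : Disjoint A C) (hBC : Disjoint B C)
    (hbiAB : ∃ d₁ d₂ : ℕ, (∀ a ∈ A, (B.filter (fun b => G.Adj a b)).card = d₁) ∧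
      (∀ b ∈ B, (A.filter (fun a => G.Adj b a)).card = d₂))
    (hbiBC : ∃ d₁ d₂ : ℕ, (∀ b ∈ B, (C.filter (fun c => G.Adj b c)).card = d₁) ∧
      (∀ c ∈ C, (B.filter (fun b => G.Adj c b)).card = d₂))
    (hABne : ∃ a ∈ A, ∃ b ∈ B, G.Adj a b)
    (hBCne : ∃ b ∈ B, ∃ c ∈ C, G.Adj b c)
    (hA : A.card = m) (hC : C.card = m) (hm : m ≤ B.card) :
    ∃ (s t : Fin m → V) (p : ∀ i, G.Walk (s i) (t i)),
      (∀ i, s i ∈ A) ∧ (∀ i, t i ∈ C) ∧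
      (∀ i, (p i).IsPath) ∧
      (∀ i, ∀ v ∈ (p i).support, v ∈ A ∪ B ∪ C) ∧
      (∀ i j, i ≠ j → ∀ v, v ∈ (p i).support → v ∉ (p j).support) :=
  stmt_0_general G A B C m hAB hAC hBC hbiAB hbiBC hABne hBCne hA hC hm
end

section
/- Let G be a finite connected graph and let S, S' be two minimum-cardinality separators of G (vertex sets whose removal disconnects a fixed pair of designated components), and suppose S^L, S'^L are components of G−S and G−S' respectively with S = N(S^L) and S' = N(S'^L). Define S^∩ = (S ∩ S') ∪ (S ∩ S'^L) ∪ (S^L ∩ S') and S^∪ = (S ∩ S') ∪ (S ∩ S'^R) ∪ (S^R ∩ S'), where S^R, S'^R are the complementary sides. Then |S^∩| + |S^∪| = |S| + |S'|. -/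
open SimpleGraph Finset

/-- the submodularity identity `|S^∩| + |S^∪| = |S| + |S'|` for two
minimum-cardinality separators `S`, `S'` of a finite connected graph, where each
separator splits the graph into a left side, the separator, and a right side. -/
theorem stmt_2 {V : Type*} [Fintype V] [DecidableEq V] (G : SimpleGraph V)
    (hconn : G.Connected)
    (S S' SL SR SL' SR' : Finset V)
    -- S splits V into SL, S, SR
    (hpart : SL ∪ S ∪ SR = Finset.univ)
    (hd1 : Disjoint SL S) (hd2 : Disjoint SL SR) (hd3 : Disjoint S SR)
    (hnoedge : ∀ a ∈ SL, ∀ b ∈ SR, ¬ G.Adj a b)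
    (hN : ∀ v, v ∈ S ↔ (v ∉ SL ∧ ∃ w ∈ SL, G.Adj w v))
    -- S' splits V into SL', S', SR'
    (hpart' : SL' ∪ S' ∪ SR' = Finset.univ)
    (hd1' : Disjoint SL' S') (hd2' : Disjoint SL' SR') (hd3' : Disjoint S' SR')
    (hnoedge' : ∀ a ∈ SL', ∀ b ∈ SR', ¬ G.Adj a b)
    (hN' : ∀ v, v ∈ S' ↔ (v ∉ SL' ∧ ∃ w ∈ SL', G.Adj w v))
    -- both are minimum-cardinality separators
    (hsep : ¬ (G.induce ((↑S : Set V)ᶜ)).Connected)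
    (hsep' : ¬ (G.induce ((↑S' : Set V)ᶜ)).Connected)
    (hmin : ∀ T : Finset V, ¬ (G.induce ((↑T : Set V)ᶜ)).Connected → S.card ≤ T.card)
    (hmin' : ∀ T : Finset V, ¬ (G.induce ((↑T : Set V)ᶜ)).Connected → S'.card ≤ T.card) :
    ((S ∩ S') ∪ (S ∩ SL') ∪ (SL ∩ S')).card
      + ((S ∩ S') ∪ (S ∩ SR') ∪ (SR ∩ S')).card = S.card + S'.card := by
  classical
  -- membership-level disjointness facts
  have p1 := Finset.disjoint_left.mp hd1    -- SL S
  have p2 := Finset.disjoint_left.mp hd2    -- SL SR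
  have p3 := Finset.disjoint_left.mp hd3    -- S SR
  have q1 := Finset.disjoint_left.mp hd1'   -- SL' S'
  have q2 := Finset.disjoint_left.mp hd2'   -- SL' SR'
  have q3 := Finset.disjoint_left.mp hd3'   -- S' SR'
  have dA1 : Disjoint (S ∩ S') (S ∩ SL') := by
    simp only [Finset.disjoint_left, Finset.mem_inter]
    rintro x ⟨_, h1⟩ ⟨_, h2⟩; exact q1 h2 h1
  have dA2 : Disjoint ((S ∩ S') ∪ (S ∩ SL')) (S ∩ SR') := by
    simp only [Finset.disjoint_left, Finset.mem_union, Finset.mem_inter]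
    rintro x (⟨_, h1⟩ | ⟨_, h1⟩) ⟨_, h2⟩
    · exact q3 h1 h2
    · exact q2 h1 h2
  have dB1 : Disjoint (S ∩ S') (SL ∩ S') := by
    simp only [Finset.disjoint_left, Finset.mem_inter]
    rintro x ⟨h1, _⟩ ⟨h2, _⟩; exact p1 h2 h1
  have dB2 : Disjoint ((S ∩ S') ∪ (SL ∩ S')) (SR ∩ S') := by
    simp only [Finset.disjoint_left, Finset.mem_union, Finset.mem_inter]
    rintro x (⟨h1, _⟩ | ⟨h1, _⟩) ⟨h2, _⟩
    · exact p3 h1 h2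
    · exact p2 h1 h2
  have dC2 : Disjoint ((S ∩ S') ∪ (S ∩ SL')) (SL ∩ S') := by
    simp only [Finset.disjoint_left, Finset.mem_union, Finset.mem_inter]
    rintro x (⟨h1, _⟩ | ⟨h1, h1'⟩) ⟨h2, h2'⟩
    · exact p1 h2 h1
    · exact q1 h1' h2'
  have dD1 : Disjoint (S ∩ S') (S ∩ SR') := by
    simp only [Finset.disjoint_left, Finset.mem_inter]
    rintro x ⟨_, h1⟩ ⟨_, h2⟩; exact q3 h1 h2
  have dD2 : Disjoint ((S ∩ S') ∪ (S ∩ SR')) (SR ∩ S') := by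
    simp only [Finset.disjoint_left, Finset.mem_union, Finset.mem_inter]
    rintro x (⟨h1, _⟩ | ⟨h1, _⟩) ⟨h2, _⟩
    · exact p3 h1 h2
    · exact p3 h1 h2
  have hScard : S.card = (S ∩ S').card + (S ∩ SL').card + (S ∩ SR').card := by
    have hu : S = (S ∩ S') ∪ (S ∩ SL') ∪ (S ∩ SR') := by
      rw [← Finset.inter_union_distrib_left, ← Finset.inter_union_distrib_left]
      have hU : S' ∪ SL' ∪ SR' = Finset.univ := by
        rw [← hpart']; ext x; simp [Finset.mem_union]; tauto
      rw [hU, Finset.inter_univ]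
    conv_lhs => rw [hu]
    rw [Finset.card_union_of_disjoint dA2, Finset.card_union_of_disjoint dA1]
  have hS'card : S'.card = (S ∩ S').card + (SL ∩ S').card + (SR ∩ S').card := by
    have hu : S' = (S ∩ S') ∪ (SL ∩ S') ∪ (SR ∩ S') := by
      rw [← Finset.union_inter_distrib_right, ← Finset.union_inter_distrib_right]
      have hU : S ∪ SL ∪ SR = Finset.univ := by
        rw [← hpart]; ext x; simp [Finset.mem_union]; tauto
      rw [hU, Finset.univ_inter]
    conv_lhs => rw [hu]
    rw [Finset.card_union_of_disjoint dB2, Finset.card_union_of_disjoint dB1]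
  have hA : ((S ∩ S') ∪ (S ∩ SL') ∪ (SL ∩ S')).card
      = (S ∩ S').card + (S ∩ SL').card + (SL ∩ S').card := by
    rw [Finset.card_union_of_disjoint dC2, Finset.card_union_of_disjoint dA1]
  have hB : ((S ∩ S') ∪ (S ∩ SR') ∪ (SR ∩ S')).card
      = (S ∩ S').card + (S ∩ SR').card + (SR ∩ S').card := by
    rw [Finset.card_union_of_disjoint dD2, Finset.card_union_of_disjoint dD1]
  omega
end

section
/- Let G be a finite connected vertex-transitive graph and let Δ ≤ Aut(G) be a transitive subgroup such that every prime dividing |Δ| is strictly greater than the maximum degree of G. Then Δ acts regularly on V(G), i.e., the point stabilizer of every vertex in Δ is trivial. -/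
/-!
A nontrivial `σ ∈ Δ` fixing a vertex fixes, by connectivity, some vertex `a` while moving
a neighbour `b`. The stabilizer of `a` in `Δ` permutes `N(a)`, so the orbit of `b` under it has size
between `2` and `deg a`; this size divides `|Δ|`, so its least prime factor is a prime divisor of `|Δ|`
that is at most the maximum degree. -/

open SimpleGraph

/-- The automorphism group of `G`, as a subgroup of the symmetric group on the vertices. -/
def autGroup {V : Type*} (G : SimpleGraph V) : Subgroup (Equiv.Perm V) where
  carrier := {σ | ∀ a b, G.Adj (σ a) (σ b) ↔ G.Adj a b}
  one_mem' := fun _ _ => Iff.rfl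
  mul_mem' := by
    intro σ τ hσ hτ a b
    rw [Equiv.Perm.mul_apply, Equiv.Perm.mul_apply]
    exact (hσ _ _).trans (hτ _ _)
  inv_mem' := by
    intro σ hσ a b
    rw [← hσ (σ⁻¹ a) (σ⁻¹ b), Equiv.Perm.coe_inv, Equiv.apply_symm_apply, Equiv.apply_symm_apply]

open MulAction

theorem exists_prime_dvd_card_le_ncard_orbit {H α : Type*} [Group H] [Finite H] [MulAction H α]
    {x : α} (hx : (orbit H x).Nontrivial) :
    ∃ p, p.Prime ∧ p ∣ Nat.card H ∧ p ≤ (orbit H x).ncard := by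
  have hlt : 1 < (orbit H x).ncard := (Set.one_lt_ncard (Set.finite_range _)).mpr hx
  have hdvd : (orbit H x).ncard ∣ Nat.card H := index_stabilizer H x ▸ Subgroup.index_dvd_card _
  exact ⟨_, Nat.minFac_prime hlt.ne', (Nat.minFac_dvd _).trans hdvd, Nat.minFac_le (by omega)⟩

section

variable {V : Type*} {G : SimpleGraph V} {H : Subgroup (Equiv.Perm V)} {a b : V}

theorem orbit_subset_neighborSet (hH : H ≤ autGroup G) (hfix : H ≤ stabilizer (Equiv.Perm V) a)
    (hab : G.Adj a b) : orbit H b ⊆ G.neighborSet a := by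
  rintro _ ⟨τ, rfl⟩
  have hτa : τ.1 a = a := hfix τ.2
  simpa only [mem_neighborSet, Subgroup.smul_def, Equiv.Perm.smul_def, hτa] using (hH τ.2 a b).mpr hab

theorem ncard_orbit_le_degree [Fintype V] [DecidableRel G.Adj] (hH : H ≤ autGroup G)
    (hfix : H ≤ stabilizer (Equiv.Perm V) a) (hab : G.Adj a b) :
    (orbit H b).ncard ≤ G.degree a := by
  calc (orbit H b).ncard ≤ (G.neighborSet a).ncard :=
        Set.ncard_le_ncard (orbit_subset_neighborSet hH hfix hab)
    _ = G.degree a := by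
        rw [Set.ncard_eq_toFinset_card', Set.toFinset_card, card_neighborSet_eq_degree]

end

theorem stmt_11_general {V : Type*} [Fintype V] (G : SimpleGraph V) [DecidableRel G.Adj]
    (hconn : G.Connected)
    (Δ : Subgroup (Equiv.Perm V)) (hΔ : Δ ≤ autGroup G)
    (hp : ∀ p : ℕ, p.Prime → p ∣ Nat.card Δ → G.maxDegree < p) :
    ∀ σ ∈ Δ, ∀ v : V, σ v = v → σ = 1 := by
  intro σ hσ v hv
  by_contra hne
  obtain ⟨w, hw⟩ : ∃ w, σ w ≠ w := not_forall.mp fun h => hne (Equiv.ext h)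
  obtain ⟨d, -, ha, hb⟩ := (hconn v w).some.exists_boundary_dart {x | σ x = x} hv hw
  let H := Δ ⊓ stabilizer (Equiv.Perm V) d.fst
  have hHΔ : H ≤ autGroup G := inf_le_left.trans hΔ
  have hnontriv : (orbit H d.snd).Nontrivial :=
    ⟨_, ⟨⟨σ, hσ, ha⟩, rfl⟩, _, mem_orbit_self _, hb⟩
  obtain ⟨p, hprime, hpH, hple⟩ := exists_prime_dvd_card_le_ncard_orbit hnontriv
  have hpdeg : p ≤ G.maxDegree :=
    hple.trans ((ncard_orbit_le_degree hHΔ inf_le_right d.adj).trans (G.degree_le_maxDegree _))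
  exact hpdeg.not_gt (hp p hprime (hpH.trans (Subgroup.card_dvd_of_le inf_le_left)))

/-- a transitive subgroup `Δ ≤ Aut(G)` of a finite connected
vertex-transitive graph `G` all of whose prime divisors exceed the maximum degree of
`G` acts regularly: every point stabilizer is trivial. -/
theorem stmt_11 {V : Type*} [Fintype V] (G : SimpleGraph V) [DecidableRel G.Adj]
    (hconn : G.Connected)
    (hvt : ∀ v w : V, ∃ σ ∈ autGroup G, σ v = w)
    (Δ : Subgroup (Equiv.Perm V)) (hΔ : Δ ≤ autGroup G)
    (htrans : ∀ v w : V, ∃ σ ∈ Δ, σ v = w)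
    (hp : ∀ p : ℕ, p.Prime → p ∣ Nat.card Δ → G.maxDegree < p) :
    ∀ σ ∈ Δ, ∀ v : V, σ v = v → σ = 1 :=
  stmt_11_general G hconn Δ hΔ hp
end

section
/- Let G be an infinite, connected, locally finite, edge-transitive graph with exactly two ends, and let S be a minimum-cardinality separator separating the two ends, with S^L and S^R the two infinite components of G − S. Then there is an automorphism ψ of G and a set C ∈ {S^L, S^R} such that ψ(C ∪ N(C)) ⊆ C and C \ ψ(C) is finite; in particular, G is a strip and ψ has infinite order. -/
open SimpleGraph

/-- A graph is edge-transitive if any edge can be mapped to any other edge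
(as unordered pairs) by an automorphism. -/
def EdgeTransitive {V : Type*} (G : SimpleGraph V) : Prop :=
  ∀ ⦃a b c d : V⦄, G.Adj a b → G.Adj c d →
    ∃ σ : G ≃g G, (σ a = c ∧ σ b = d) ∨ (σ a = d ∧ σ b = c)

/-- The (open) neighborhood of a set of vertices. -/
def setNbhd {V : Type*} (G : SimpleGraph V) (C : Set V) : Set V :=
  {v | v ∉ C ∧ ∃ w ∈ C, G.Adj v w}

/-!
Write `N = N(SL)` and `R = V \ (SL ∪ N)`. Minimality of `S` forces every vertex of `S` to have a
neighbour in `SR`, so `V \ SL` induces a connected graph. Edge-transitivity moves any finite set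
deep into `SL`. If an automorphism `σ` moves `N` into `SL`, the connected set `V \ SL` avoids
`σ N`, so it lies entirely in `σ R` or entirely in `σ SL`. In the first case `σ` itself shifts
`SL` into itself; in the second `σ` swaps the two sides, and the composition of two swaps, the
second chosen deep enough relative to the first, is a shift. Every finiteness claim comes from
the fact that with only two ends, three pairwise disjoint sets with a common finite boundary
cannot all be infinite.
-/

section setNbhd

variable {V : Type*} {G : SimpleGraph V} {A B D K : Set V}

theorem setNbhd_subset_iff :
    setNbhd G D ⊆ K ↔ ∀ a ∈ D, ∀ b, G.Adj a b → b ∈ D ∪ K := by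
  constructor
  · intro h a ha b hab
    by_cases hb : b ∈ D
    · exact Or.inl hb
    · exact Or.inr (h ⟨hb, a, ha, hab.symm⟩)
  · rintro h v ⟨hv, w, hw, hvw⟩
    exact (h w hw v hvw.symm).resolve_left hv

theorem mem_of_adj_of_setNbhd_subset (hD : setNbhd G D ⊆ K) {a b : V} (ha : a ∈ D)
    (hab : G.Adj a b) (hb : b ∉ K) : b ∈ D :=
  by_contra fun hbD => hb (hD ⟨hbD, a, ha, hab.symm⟩)

theorem setNbhd_compl_union_subset (hD : setNbhd G D ⊆ K) : setNbhd G (D ∪ K)ᶜ ⊆ K := by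
  rintro v ⟨hv, w, hw, hvw⟩
  rcases Set.notMem_compl_iff.1 hv with hv | hv
  · exact absurd (hD ⟨fun h => hw (Or.inl h), v, hv, hvw.symm⟩) fun h => hw (Or.inr h)
  · exact hv

theorem setNbhd_inter_subset : setNbhd G (A ∩ B) ⊆ setNbhd G A ∪ setNbhd G B := by
  rintro v ⟨hv, w, ⟨hwA, hwB⟩, hvw⟩
  by_cases hvA : v ∈ A
  · exact Or.inr ⟨fun hvB => hv ⟨hvA, hvB⟩, w, hwB, hvw⟩
  · exact Or.inl ⟨hvA, w, hwA, hvw⟩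

theorem setNbhd_image (σ : G ≃g G) (D : Set V) : setNbhd G (σ '' D) = σ '' setNbhd G D := by
  ext v
  constructor
  · rintro ⟨hv, _, ⟨w, hw, rfl⟩, hvw⟩
    refine ⟨σ.symm v, ⟨fun h => hv ⟨_, h, σ.apply_symm_apply v⟩, w, hw, ?_⟩,
      σ.apply_symm_apply v⟩
    rwa [← σ.map_adj_iff, σ.apply_symm_apply]
  · rintro ⟨v, ⟨hv, w, hw, hvw⟩, rfl⟩
    exact ⟨fun ⟨u, hu, h⟩ => hv (σ.injective h ▸ hu), σ w, ⟨w, hw, rfl⟩, σ.map_adj_iff.2 hvw⟩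

theorem mem_of_reachable_of_setNbhd_subset (hD : setNbhd G D ⊆ K) {u v : ↥Kᶜ}
    (h : (G.induce Kᶜ).Reachable u v) (hu : (u : V) ∈ D) : (v : V) ∈ D := by
  obtain ⟨p⟩ := h
  induction p with
  | nil => exact hu
  | @cons x y z hxy _ ih => exact ih (mem_of_adj_of_setNbhd_subset hD hu hxy y.2)

theorem subset_of_induce_preconnected (hD : setNbhd G D ⊆ K) {X : Set V}
    (hX : (G.induce X).Preconnected) (hXK : Disjoint X K) {x : V} (hxX : x ∈ X) (hxD : x ∈ D) :
    X ⊆ D := fun y hy =>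
  have hXK' : X ⊆ Kᶜ := hXK.subset_compl_right
  mem_of_reachable_of_setNbhd_subset hD (u := ⟨x, hXK' hxX⟩) (v := ⟨y, hXK' hy⟩)
    ((hX ⟨x, hxX⟩ ⟨y, hy⟩).map (G.induceHomOfLE hXK').toHom) hxD

theorem exists_reachable_setNbhd (hG : G.Preconnected) (hD : D.Nonempty) {v : V} (hv : v ∉ D) :
    ∃ s, ∃ hs : s ∈ setNbhd G D, (G.induce Dᶜ).Reachable ⟨v, hv⟩ ⟨s, hs.1⟩ := by
  obtain ⟨d, hd⟩ := hD
  obtain ⟨p⟩ := hG v d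
  induction p with
  | nil => exact absurd hd hv
  | @cons v w _ hvw _ ih =>
    by_cases hw : w ∈ D
    · exact ⟨v, ⟨hv, w, hw, hvw⟩, Reachable.refl _⟩
    · obtain ⟨s, hs, hws⟩ := ih hw hd
      exact ⟨s, hs, (show (G.induce Dᶜ).Adj ⟨v, hv⟩ ⟨w, hw⟩ from hvw).reachable.trans hws⟩

theorem connected_induce_compl (hG : G.Preconnected) {X : Set V} (hD : D.Nonempty)
    (hX : (G.induce X).Connected) (hXD : Disjoint X D)
    (hN : ∀ s ∈ setNbhd G D, ∃ x ∈ X, G.Adj s x) : (G.induce Dᶜ).Connected := by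
  have hXD' : X ⊆ Dᶜ := hXD.subset_compl_right
  obtain ⟨⟨x₀, hx₀⟩⟩ := hX.nonempty
  rw [connected_iff_exists_forall_reachable]
  refine ⟨⟨x₀, hXD' hx₀⟩, fun ⟨v, hv⟩ => ?_⟩
  obtain ⟨s, hs, hvs⟩ := exists_reachable_setNbhd hG hD hv
  obtain ⟨x, hx, hsx⟩ := hN s hs
  have hx₀x : (G.induce Dᶜ).Reachable ⟨x₀, hXD' hx₀⟩ ⟨x, hXD' hx⟩ :=
    (hX ⟨x₀, hx₀⟩ ⟨x, hx⟩).map (G.induceHomOfLE hXD').toHom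
  have hsx' : (G.induce Dᶜ).Adj ⟨s, hs.1⟩ ⟨x, hXD' hx⟩ := hsx
  exact hx₀x.trans (hsx'.reachable.symm.trans hvs.symm)

end setNbhd

section Shift

variable {α : Type*}

def IsShift (L N : Set α) (f : α → α) : Prop :=
  f '' (L ∪ N) ⊆ L ∧ (L \ f '' L).Finite

def IsFlip (L : Set α) (f : α → α) : Prop :=
  f '' Lᶜ ⊆ L ∧ (L ∩ f '' L).Finite

theorem IsFlip.isShift_symm_trans {f g : α ≃ α} {L N : Set α} (hg : IsFlip L g)
    (hf : f '' Lᶜ ⊆ L) (hfg : ∀ x ∈ L, f x ∈ L ∪ N → g x ∈ L) :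
    IsShift L N (f.symm.trans g) := by
  constructor
  · rintro _ ⟨x, hx, rfl⟩
    by_cases hy : f.symm x ∈ L
    · exact hfg _ hy (by rwa [f.apply_symm_apply])
    · exact hg.1 ⟨_, hy, rfl⟩
  · refine hg.2.subset fun x ⟨hxL, hxψ⟩ => ⟨hxL, g.symm x, by_contra fun hy => hxψ ?_,
      g.apply_symm_apply x⟩
    exact ⟨f (g.symm x), hf ⟨_, hy, rfl⟩, by simp⟩

theorem Equiv.Perm.pow_ne_one_of_mapsTo {f : Equiv.Perm α} {C : Set α}
    (hC : Set.MapsTo f C C) {x : α} (hx : x ∉ C) (hfx : f x ∈ C) {n : ℕ} (hn : 0 < n) :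
    f ^ n ≠ 1 := by
  intro h
  obtain ⟨m, rfl⟩ := Nat.exists_eq_add_of_lt hn
  have : (f ^ (0 + m + 1)) x ∈ C := by
    rw [zero_add, pow_succ, Equiv.Perm.mul_apply, Equiv.Perm.coe_pow]
    exact hC.iterate m hfx
  rw [h, Equiv.Perm.one_apply] at this
  exact hx this

end Shift

namespace SimpleGraph

variable {V : Type*} {G : SimpleGraph V}

def SeparatesInfiniteParts (G : SimpleGraph V) (K : Set V) : Prop :=
  ∃ A B : Set V, Disjoint A K ∧ Disjoint B K ∧ Disjoint A B ∧ A.Infinite ∧ B.Infinite ∧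
    (∀ a ∈ A, ∀ b : V, G.Adj a b → b ∈ A ∪ K) ∧ (∀ a ∈ B, ∀ b : V, G.Adj a b → b ∈ B ∪ K)

theorem exists_adj_of_forall_separates_ncard_le {S B : Set V} (hS : S.Finite)
    (hmin : ∀ S' : Set V, S'.Finite → G.SeparatesInfiniteParts S' → S.ncard ≤ S'.ncard)
    (hBS : Disjoint B S) (hB : B.Infinite) (hBc : Bᶜ.Infinite) (hBN : setNbhd G B ⊆ S)
    {s : V} (hs : s ∈ S) : ∃ b ∈ B, G.Adj s b := by
  by_contra! hno
  have hBN' : setNbhd G B ⊆ S \ {s} := by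
    rintro v ⟨hvB, b, hb, hvb⟩
    refine ⟨hBN ⟨hvB, b, hb, hvb⟩, ?_⟩
    rintro rfl
    exact hno b hb hvb
  refine (Set.ncard_sdiff_singleton_lt_of_mem hs hS).not_ge (hmin _ hS.sdiff
    ⟨(B ∪ S \ {s})ᶜ, B, disjoint_compl_left.mono_right Set.subset_union_right,
      hBS.mono_right Set.sdiff_subset, disjoint_compl_left.mono_right Set.subset_union_left,
      ?_, hB, setNbhd_subset_iff.1 (setNbhd_compl_union_subset hBN'),
      setNbhd_subset_iff.1 hBN'⟩)
  rw [Set.compl_union]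
  exact hBc.sdiff hS.sdiff

open CategoryTheory in
theorem exists_end_eq_of_infinite [G.LocallyFinite] [Fact G.Preconnected] {K : Finset V}
    {C : G.ComponentCompl K} (hC : C.supp.Infinite) : ∃ e ∈ G.end, e (Opposite.op K) = C := by
  have : Infinite V := ⟨fun _ => hC (Set.toFinite _)⟩
  have : ∀ j, Finite (G.componentComplFunctor.obj j) := fun j => G.componentCompl_finite j.unop
  have : ∀ j, Nonempty (G.componentComplFunctor.obj j) :=
    fun j => G.componentCompl_nonempty_of_infinite j.unop
  let F := G.componentComplFunctor
  have hML : F.IsMittagLeffler :=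
    F.isMittagLeffler_of_exists_finite_range fun j => ⟨j, 𝟙 j, Set.toFinite _⟩
  have := F.toEventualRanges_nonempty hML
  obtain ⟨s, hs⟩ := F.toEventualRanges.eval_section_surjective_of_surjective
    (F.surjective_toEventualRanges hML) (Opposite.op K)
    ⟨C, (G.infinite_iff_in_eventualRange C).1 hC⟩
  exact ⟨_, (F.toEventualRangesSectionsEquiv s).2, congrArg Subtype.val hs⟩

theorem exists_end_supp_subset [G.LocallyFinite] (hG : G.Preconnected) {K : Finset V}
    {D : Set V} (hD : D.Infinite) (hDK : setNbhd G D ⊆ K) :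
    ∃ e ∈ G.end, (e (Opposite.op K)).supp ⊆ D := by
  have : Fact G.Preconnected := ⟨hG⟩
  obtain ⟨C, hC⟩ : ∃ C : G.ComponentCompl K, (C.supp ∩ D).Infinite := by
    by_contra! h
    refine hD (((Set.finite_iUnion h).union K.finite_toSet).subset fun v hv => ?_)
    by_cases hvK : v ∈ (K : Set V)
    · exact Or.inr hvK
    · exact Or.inl (Set.mem_iUnion.2 ⟨G.componentComplMk hvK, G.componentComplMk_mem hvK, hv⟩)
  obtain ⟨c, ⟨hcK, hcC⟩, hcD⟩ := hC.nonempty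
  have hCD : C.supp ⊆ D := by
    rintro v ⟨hvK, hvC⟩
    exact mem_of_reachable_of_setNbhd_subset hDK
      (ConnectedComponent.exact (hcC.trans hvC.symm)) hcD
  obtain ⟨e, he, rfl⟩ := exists_end_eq_of_infinite (hC.mono Set.inter_subset_left)
  exact ⟨e, he, hCD⟩

theorem finite_of_card_end_eq_two [G.LocallyFinite] (hG : G.Preconnected)
    (hends : Nat.card G.end = 2) {K A B D : Set V} (hK : K.Finite) (hA : A.Infinite)
    (hB : B.Infinite) (hAK : setNbhd G A ⊆ K) (hBK : setNbhd G B ⊆ K) (hDK : setNbhd G D ⊆ K)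
    (hAB : Disjoint A B) (hAD : Disjoint A D) (hBD : Disjoint B D) : D.Finite := by
  by_contra hD
  rw [← hK.coe_toFinset] at hAK hBK hDK
  obtain ⟨a, ha, haA⟩ := exists_end_supp_subset hG hA hAK
  obtain ⟨b, hb, hbB⟩ := exists_end_supp_subset hG hB hBK
  obtain ⟨d, hd, hdD⟩ := exists_end_supp_subset hG hD hDK
  have hne : ∀ {x y : G.end} {X Y : Set V}, (x.1 (Opposite.op hK.toFinset)).supp ⊆ X →
      (y.1 (Opposite.op hK.toFinset)).supp ⊆ Y → Disjoint X Y → x ≠ y := by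
    rintro x y X Y hX hY hXY rfl
    obtain ⟨v, hv⟩ := (x.1 (Opposite.op hK.toFinset)).nonempty
    exact hXY.ne_of_mem (hX hv) (hY hv) rfl
  have : Finite G.end := Nat.finite_of_card_ne_zero (by omega)
  have h3 := Set.ncard_le_card ({⟨a, ha⟩, ⟨b, hb⟩, ⟨d, hd⟩} : Set G.end)
  rw [Set.ncard_eq_three.2 ⟨_, _, _, hne haA hbB hAB, hne haA hdD hAD, hne hbB hdD hBD, rfl⟩,
    hends] at h3
  omega

theorem Reachable.dist_map_le {W : Type*} {G' : SimpleGraph W} {u v : V} (h : G.Reachable u v)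
    (f : G →g G') : G'.dist (f u) (f v) ≤ G.dist u v := by
  obtain ⟨p, hp⟩ := h.exists_walk_length_eq_dist
  simpa [hp] using dist_le (p.map f)

theorem finite_setOf_dist_le [G.LocallyFinite] (hG : G.Connected) (u : V) (n : ℕ) :
    {v | G.dist u v ≤ n}.Finite := by
  induction n generalizing u with
  | zero => simp [hG.dist_eq_zero_iff]
  | succ n ih =>
    refine ((Set.finite_singleton u).union
      ((G.neighborSet u).toFinite.biUnion fun w _ => ih w)).subset fun v hv => ?_
    obtain ⟨p, hp⟩ := hG.exists_walk_length_eq_dist u v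
    cases p with
    | nil => exact Or.inl rfl
    | cons h q =>
      refine Or.inr (Set.mem_biUnion h ((dist_le q).trans ?_))
      simp only [Walk.length_cons, Set.mem_ofPred_eq] at hp hv
      omega

theorem exists_iso_image_subset [G.LocallyFinite] (hG : G.Connected) (het : EdgeTransitive G)
    {L X : Set V} (hL : L.Infinite) (hN : (setNbhd G L).Finite) (hX : X.Finite) :
    ∃ σ : G ≃g G, σ '' X ⊆ L := by
  classical
  have : Nontrivial V := Set.nontrivial_of_nontrivial hL.nontrivial
  obtain ⟨a⟩ := hG.nonempty
  obtain ⟨b, hab⟩ := hG.preconnected.exists_adj_of_nontrivial a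
  obtain ⟨n, hn⟩ := (hX.image (G.dist a)).bddAbove
  obtain ⟨m, hm⟩ := (hN.image (G.dist a)).bddAbove
  -- `v` is so far from `N(L)` that the ball of radius `1 + n` around `v` misses `N(L)`
  obtain ⟨v, hvL, hvfar⟩ := (hL.sdiff (finite_setOf_dist_le hG a (m + (1 + n)))).nonempty
  obtain ⟨u, hvu⟩ := hG.preconnected.exists_adj_of_nontrivial v
  obtain ⟨σ, hσ⟩ := het hab hvu
  have hσa : G.dist v (σ a) ≤ 1 := by
    rcases hσ with ⟨h, -⟩ | ⟨h, -⟩ <;> rw [h]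
    · simp
    · exact (dist_eq_one_iff_adj.2 hvu).le
  refine ⟨σ, ?_⟩
  rintro _ ⟨x, hx, rfl⟩
  obtain ⟨p, hp⟩ := hG.exists_walk_length_eq_dist v (σ x)
  have hlen : p.length ≤ 1 + n := calc
    p.length = G.dist v (σ x) := hp
    _ ≤ G.dist v (σ a) + G.dist (σ a) (σ x) := hG.dist_triangle
    _ ≤ 1 + n := add_le_add hσa (((hG a x).dist_map_le σ.toHom).trans (hn ⟨x, hx, rfl⟩))
  have hpN : ∀ z ∈ p.support, z ∈ (setNbhd G L)ᶜ := by
    intro z hz hzN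
    refine hvfar (calc
      G.dist a v ≤ G.dist a z + G.dist z v := hG.dist_triangle
      _ ≤ m + (1 + n) := add_le_add (hm ⟨z, hzN, rfl⟩) ?_)
    rw [dist_comm]
    exact (dist_le (p.takeUntil z hz)).trans ((p.length_takeUntil_le_length hz).trans hlen)
  exact mem_of_reachable_of_setNbhd_subset le_rfl (p.induce _ hpN).reachable hvL

variable {L : Set V}

theorem compl_subset_image_or (σ : G ≃g G) (hU : (G.induce Lᶜ).Connected)
    (hσN : σ '' setNbhd G L ⊆ L) :
    Lᶜ ⊆ σ '' L ∨ Lᶜ ⊆ σ '' (L ∪ setNbhd G L)ᶜ := by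
  obtain ⟨⟨u, hu⟩⟩ := hU.nonempty
  have hdisj : Disjoint Lᶜ (σ '' setNbhd G L) := disjoint_compl_left.mono_right hσN
  have hσu : σ (σ.symm u) = u := σ.apply_symm_apply u
  by_cases h : σ.symm u ∈ L
  · exact Or.inl (subset_of_induce_preconnected (setNbhd_image σ L).subset hU.preconnected hdisj
      hu ⟨_, h, hσu⟩)
  · have hN : σ.symm u ∉ setNbhd G L := fun h' => hu (hσN ⟨_, h', hσu⟩)
    refine Or.inr (subset_of_induce_preconnected ?_ hU.preconnected hdisj hu
      ⟨_, fun h'' => h''.elim h hN, hσu⟩)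
    rw [setNbhd_image]
    exact Set.image_mono (setNbhd_compl_union_subset le_rfl)

variable [G.LocallyFinite]

theorem isShift_of_compl_subset_image (hG : G.Preconnected) (hends : Nat.card G.end = 2)
    (σ : G ≃g G) (hL : L.Infinite) (hR : (L ∪ setNbhd G L)ᶜ.Infinite)
    (hN : (setNbhd G L).Finite) (hσN : σ '' setNbhd G L ⊆ L)
    (hσ : Lᶜ ⊆ σ '' (L ∪ setNbhd G L)ᶜ) : IsShift L (setNbhd G L) σ := by
  set N := setNbhd G L
  set R := (L ∪ N)ᶜ
  have hLR : Disjoint L R := disjoint_compl_right.mono_left Set.subset_union_left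
  have hσLR : Disjoint (σ '' L) (σ '' R) := (Set.disjoint_image_iff σ.injective).2 hLR
  have hσL : σ '' L ⊆ L := fun x hx => by_contra fun h => hσLR.ne_of_mem hx (hσ h) rfl
  refine ⟨Set.image_union σ L N ▸ Set.union_subset hσL hσN, ?_⟩
  have hRN : setNbhd G R ⊆ N := setNbhd_compl_union_subset le_rfl
  have hfin : (L ∩ σ '' R).Finite := by
    refine finite_of_card_end_eq_two hG hends (hN.union (hN.image σ)) (hL.image σ.injective.injOn)
      hR ?_ (hRN.trans Set.subset_union_left) ?_ (hσLR.mono_right fun x hx => hσ (hx ∘ Or.inl))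
      (hσLR.mono_right Set.inter_subset_right) (hLR.symm.mono_right Set.inter_subset_left)
    · exact (setNbhd_image σ L).trans_subset Set.subset_union_right
    · refine setNbhd_inter_subset.trans (Set.union_subset_union le_rfl ?_)
      rw [setNbhd_image]
      exact Set.image_mono hRN
  refine ((hN.image σ).union hfin).subset fun x ⟨hxL, hxσL⟩ => ?_
  have hσx : σ (σ.symm x) = x := σ.apply_symm_apply x
  by_cases hN' : σ.symm x ∈ N
  · exact Or.inl ⟨_, hN', hσx⟩
  · exact Or.inr ⟨hxL, _, fun h => h.elim (fun h => hxσL ⟨_, h, hσx⟩) hN', hσx⟩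

theorem isFlip_of_compl_subset_image (hG : G.Preconnected) (hends : Nat.card G.end = 2)
    (σ : G ≃g G) (hR : (L ∪ setNbhd G L)ᶜ.Infinite) (hN : (setNbhd G L).Finite)
    (hσ : Lᶜ ⊆ σ '' L) : IsFlip L σ := by
  set N := setNbhd G L
  set R := (L ∪ N)ᶜ
  have hLR : Disjoint L R := disjoint_compl_right.mono_left Set.subset_union_left
  have hσLR : Disjoint (σ '' L) (σ '' R) := (Set.disjoint_image_iff σ.injective).2 hLR
  refine ⟨?_, ?_⟩
  · rw [Set.image_compl_eq σ.bijective]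
    exact Set.compl_subset_comm.1 hσ
  have hRN : setNbhd G R ⊆ N := setNbhd_compl_union_subset le_rfl
  refine finite_of_card_end_eq_two hG hends (hN.union (hN.image σ)) (hR.image σ.injective.injOn)
    hR ?_ (hRN.trans Set.subset_union_left) ?_
    (hσLR.symm.mono_right fun x hx => hσ (hx ∘ Or.inl))
    (hσLR.symm.mono_right Set.inter_subset_right) (hLR.symm.mono_right Set.inter_subset_left)
  · rw [setNbhd_image]
    exact (Set.image_mono hRN).trans Set.subset_union_right
  · exact setNbhd_inter_subset.trans (Set.union_subset_union le_rfl (setNbhd_image σ L).subset)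

theorem exists_isShift (hG : G.Connected) (het : EdgeTransitive G) (hends : Nat.card G.end = 2)
    (hL : L.Infinite) (hR : (L ∪ setNbhd G L)ᶜ.Infinite) (hN : (setNbhd G L).Finite)
    (hU : (G.induce Lᶜ).Connected) : ∃ ψ : G ≃g G, IsShift L (setNbhd G L) ψ := by
  obtain ⟨σ₁, hσ₁N⟩ := exists_iso_image_subset hG het hL hN hN
  rcases compl_subset_image_or σ₁ hU hσ₁N with h₁ | h₁
  swap
  · exact ⟨σ₁, isShift_of_compl_subset_image hG.preconnected hends σ₁ hL hR hN hσ₁N h₁⟩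
  have hflip₁ := isFlip_of_compl_subset_image hG.preconnected hends σ₁ hR hN h₁
  have hX : {x ∈ L | σ₁ x ∈ L ∪ setNbhd G L}.Finite :=
    ((hflip₁.2.union hN).preimage σ₁.injective.injOn).subset fun x ⟨hxL, hx⟩ =>
      hx.imp (fun h => ⟨h, x, hxL, rfl⟩) id
  obtain ⟨σ₂, hσ₂X⟩ := exists_iso_image_subset hG het hL hN (hN.union hX)
  have hσ₂N : σ₂ '' setNbhd G L ⊆ L := (Set.image_mono Set.subset_union_left).trans hσ₂X
  rcases compl_subset_image_or σ₂ hU hσ₂N with h₂ | h₂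
  swap
  · exact ⟨σ₂, isShift_of_compl_subset_image hG.preconnected hends σ₂ hL hR hN hσ₂N h₂⟩
  exact ⟨σ₁.symm.trans σ₂,
    IsFlip.isShift_symm_trans (f := σ₁.toEquiv) (g := σ₂.toEquiv)
      (isFlip_of_compl_subset_image hG.preconnected hends σ₂ hR hN h₂) hflip₁.1
      fun x hxL hx => hσ₂X ⟨x, Or.inr ⟨hxL, hx⟩, rfl⟩⟩

end SimpleGraph

theorem stmt_14_general {V : Type*} (G : SimpleGraph V)
    (hconn : G.Connected)
    (hlf : ∀ v : V, (G.neighborSet v).Finite)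
    (het : EdgeTransitive G)
    (hends : Nat.card G.end = 2)
    (S SL SR : Set V) (hSfin : S.Finite)
    (hRS : Disjoint SR S) (hLR : Disjoint SL SR)
    (hLinf : SL.Infinite) (hRinf : SR.Infinite)
    (hRconn : (G.induce SR).Connected)
    (hLclosed : ∀ a ∈ SL, ∀ b : V, G.Adj a b → b ∈ SL ∪ S)
    (hRclosed : ∀ a ∈ SR, ∀ b : V, G.Adj a b → b ∈ SR ∪ S)
    -- S is of minimum cardinality among finite vertex sets whose removal leaves
    -- two disjoint infinite adjacency-closed parts (i.e. separating the two ends)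
    (hmin : ∀ S' : Set V, S'.Finite →
      (∃ A B : Set V, Disjoint A S' ∧ Disjoint B S' ∧ Disjoint A B ∧
        A.Infinite ∧ B.Infinite ∧
        (∀ a ∈ A, ∀ b : V, G.Adj a b → b ∈ A ∪ S') ∧
        (∀ a ∈ B, ∀ b : V, G.Adj a b → b ∈ B ∪ S')) →
      S.ncard ≤ S'.ncard) :
    ∃ ψ ∈ autGroup G, ∃ C : Set V, (C = SL ∨ C = SR) ∧
      (⇑ψ '' (C ∪ setNbhd G C) ⊆ C) ∧
      (C \ ⇑ψ '' C).Finite ∧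
      (setNbhd G C).Nonempty ∧ (setNbhd G C).Finite ∧
      (∀ n : ℕ, 0 < n → ψ ^ n ≠ 1) := by
  have : G.LocallyFinite := fun v => (hlf v).fintype
  have hLN : setNbhd G SL ⊆ S := setNbhd_subset_iff.2 hLclosed
  have hRN : setNbhd G SR ⊆ S := setNbhd_subset_iff.2 hRclosed
  have hSR : SR ⊆ (SL ∪ setNbhd G SL)ᶜ := fun r hr h =>
    h.elim (hLR.ne_of_mem · hr rfl) fun h => hRS.ne_of_mem hr (hLN h) rfl
  have hU : (G.induce SLᶜ).Connected :=
    connected_induce_compl hconn.preconnected hLinf.nonempty hRconn hLR.symm fun s hs =>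
      exists_adj_of_forall_separates_ncard_le hSfin hmin hRS hRinf
        (hLinf.mono hLR.subset_compl_right) hRN (hLN hs)
  obtain ⟨ψ, hψ, hfin⟩ := exists_isShift hconn het hends hLinf (hRinf.mono hSR)
    (hSfin.subset hLN) hU
  obtain ⟨r, hr⟩ := hRinf.nonempty
  obtain ⟨s, hs, -⟩ := exists_reachable_setNbhd hconn.preconnected hLinf.nonempty
    (hSR hr ∘ Or.inl)
  refine ⟨ψ.toEquiv, fun a b => ψ.map_adj_iff, SL, Or.inl rfl, hψ, hfin, ⟨s, hs⟩,
    hSfin.subset hLN, fun n hn => ?_⟩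
  exact Equiv.Perm.pow_ne_one_of_mapsTo (fun x hx => hψ ⟨x, Or.inl hx, rfl⟩) hs.1
    (hψ ⟨s, Or.inr hs, rfl⟩) hn

/-- let `G` be an infinite, connected, locally finite, edge-transitive
graph with exactly two ends, `S` a minimum separator separating the two ends, and
`SL`, `SR` the two infinite components of `G − S`.  Then there is an automorphism `ψ`
of `G` and `C ∈ {SL, SR}` with `ψ(C ∪ N(C)) ⊆ C` and `C \ ψ(C)` finite; in particular
`G` is a strip and `ψ` has infinite order. -/
theorem stmt_14 {V : Type*} [Infinite V] (G : SimpleGraph V)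
    (hconn : G.Connected)
    (hlf : ∀ v : V, (G.neighborSet v).Finite)
    (het : EdgeTransitive G)
    (hends : Nat.card G.end = 2)
    (S SL SR : Set V) (hSfin : S.Finite)
    (hLS : Disjoint SL S) (hRS : Disjoint SR S) (hLR : Disjoint SL SR)
    (hLinf : SL.Infinite) (hRinf : SR.Infinite)
    (hLconn : (G.induce SL).Connected) (hRconn : (G.induce SR).Connected)
    (hLclosed : ∀ a ∈ SL, ∀ b : V, G.Adj a b → b ∈ SL ∪ S)
    (hRclosed : ∀ a ∈ SR, ∀ b : V, G.Adj a b → b ∈ SR ∪ S)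
    -- S is of minimum cardinality among finite vertex sets whose removal leaves
    -- two disjoint infinite adjacency-closed parts (i.e. separating the two ends)
    (hmin : ∀ S' : Set V, S'.Finite →
      (∃ A B : Set V, Disjoint A S' ∧ Disjoint B S' ∧ Disjoint A B ∧
        A.Infinite ∧ B.Infinite ∧
        (∀ a ∈ A, ∀ b : V, G.Adj a b → b ∈ A ∪ S') ∧
        (∀ a ∈ B, ∀ b : V, G.Adj a b → b ∈ B ∪ S')) →
      S.ncard ≤ S'.ncard) :
    ∃ ψ ∈ autGroup G, ∃ C : Set V, (C = SL ∨ C = SR) ∧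
      (⇑ψ '' (C ∪ setNbhd G C) ⊆ C) ∧
      (C \ ⇑ψ '' C).Finite ∧
      (setNbhd G C).Nonempty ∧ (setNbhd G C).Finite ∧
      (∀ n : ℕ, 0 < n → ψ ^ n ≠ 1) :=
  stmt_14_general G hconn hlf het hends S SL SR hSfin hRS hLR hLinf hRinf hRconn hLclosed hRclosed
    hmin
end

section
/- Let G be a bipartite graph with parts V₁ and V₂, where |V₁| ≥ (M+1)·|V₂| for some M ∈ ℕ, every vertex of V₁ has degree c₁ ≥ 1 and every vertex of V₂ has degree c₂. Then there is a set E' of edges of G such that every vertex of V₁ is incident with at most one edge of E' and every vertex of V₂ is incident with at least M edges of E'. -/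
open SimpleGraph Finset

/-- let `G` be bipartite with parts `V₁`, `V₂`, with
`|V₁| ≥ (M+1)·|V₂|`, every vertex of `V₁` of degree `c₁ ≥ 1` and every vertex of `V₂`
of degree `c₂`.  Then there is a set `E'` of edges of `G` such that every vertex of
`V₁` is incident with at most one edge of `E'` and every vertex of `V₂` is incident
with at least `M` edges of `E'`. -/
theorem stmt_18 {V : Type*} [Fintype V] [DecidableEq V] (G : SimpleGraph V)
    [DecidableRel G.Adj] (V₁ V₂ : Finset V) (M c₁ c₂ : ℕ)
    (hpart : V₁ ∪ V₂ = Finset.univ) (hdisj : Disjoint V₁ V₂)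
    (hcross : ∀ a b, G.Adj a b → (a ∈ V₁ ∧ b ∈ V₂) ∨ (a ∈ V₂ ∧ b ∈ V₁))
    (hcard : (M + 1) * V₂.card ≤ V₁.card)
    (hc₁ : 1 ≤ c₁)
    (hd1 : ∀ v ∈ V₁, G.degree v = c₁) (hd2 : ∀ v ∈ V₂, G.degree v = c₂) :
    ∃ E' ⊆ G.edgeFinset,
      (∀ v ∈ V₁, (E'.filter (fun e => v ∈ e)).card ≤ 1) ∧
      (∀ v ∈ V₂, M ≤ (E'.filter (fun e => v ∈ e)).card) := by
  classical
  rcases V₂.eq_empty_or_nonempty with h2 | h2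
  · refine ⟨∅, by simp, fun v hv => by simp, fun v hv => by simp [h2] at hv⟩
  -- cross-neighbor facts
  have hn21 : ∀ v ∈ V₂, ∀ u, G.Adj v u → u ∈ V₁ := by
    intro v hv u hadj
    rcases hcross v u hadj with ⟨hv1, _⟩ | ⟨_, hu1⟩
    · exact absurd hv (Finset.disjoint_left.mp hdisj hv1)
    · exact hu1
  have hn12 : ∀ v ∈ V₁, ∀ u, G.Adj v u → u ∈ V₂ := by
    intro v hv u hadj
    rcases hcross v u hadj with ⟨_, hu2⟩ | ⟨hv2, _⟩
    · exact hu2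
    · exact absurd hv2 (Finset.disjoint_left.mp hdisj hv)
  -- double counting lemma
  have aux : ∀ S T : Finset V, (∀ v ∈ S, G.neighborFinset v ⊆ T) →
      ∑ v ∈ S, G.degree v ≤ ∑ u ∈ T, G.degree u := by
    intro S T hST
    have h1 : ∀ v ∈ S, G.degree v = (T.filter (fun u => G.Adj v u)).card := by
      intro v hv
      rw [← card_neighborFinset_eq_degree]
      congr 1
      ext u
      simp only [mem_filter, mem_neighborFinset]
      exact ⟨fun h => ⟨hST v hv (by simpa [mem_neighborFinset] using h), h⟩, fun h => h.2⟩
    calc ∑ v ∈ S, G.degree v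
        = ∑ v ∈ S, ∑ u ∈ T, if G.Adj v u then 1 else 0 := by
          refine Finset.sum_congr rfl fun v hv => ?_
          rw [h1 v hv, Finset.card_filter]
      _ = ∑ u ∈ T, ∑ v ∈ S, if G.Adj v u then 1 else 0 := Finset.sum_comm
      _ = ∑ u ∈ T, (S.filter (fun v => G.Adj v u)).card := by
          refine Finset.sum_congr rfl fun u _ => ?_
          rw [Finset.card_filter]
      _ ≤ ∑ u ∈ T, G.degree u := by
          refine Finset.sum_le_sum fun u _ => ?_
          rw [← card_neighborFinset_eq_degree]
          refine Finset.card_le_card fun v hv => ?_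
          simp only [mem_filter] at hv
          simp [mem_neighborFinset, hv.2.symm]
  -- c₂ ≥ (M+1) * c₁
  have hkey : c₁ * V₁.card ≤ c₂ * V₂.card := by
    have := aux V₁ V₂ (fun v hv u hu => hn12 v hv u (by simpa [mem_neighborFinset] using hu))
    calc c₁ * V₁.card = ∑ v ∈ V₁, G.degree v := by
          rw [Finset.sum_congr rfl hd1, Finset.sum_const, smul_eq_mul, mul_comm]
      _ ≤ ∑ u ∈ V₂, G.degree u := this
      _ = c₂ * V₂.card := by
          rw [Finset.sum_congr rfl hd2, Finset.sum_const, smul_eq_mul, mul_comm]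
  have hc2 : (M + 1) * c₁ ≤ c₂ := by
    have h : ((M + 1) * c₁) * V₂.card ≤ c₂ * V₂.card := by
      calc ((M + 1) * c₁) * V₂.card = c₁ * ((M + 1) * V₂.card) := by ring
        _ ≤ c₁ * V₁.card := Nat.mul_le_mul_left _ hcard
        _ ≤ c₂ * V₂.card := hkey
    exact Nat.le_of_mul_le_mul_right h h2.card_pos
  -- Hall setup
  set t : ↥V₂ × Fin (M + 1) → Finset V := fun p => G.neighborFinset (p.1 : V) with ht
  have hall : ∀ s : Finset (↥V₂ × Fin (M + 1)), s.card ≤ (s.biUnion t).card := by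
    intro s
    set S : Finset V := s.image (fun p => (p.1 : V)) with hS
    have hS2 : S ⊆ V₂ := by
      intro v hv
      simp only [hS, mem_image] at hv
      obtain ⟨p, _, rfl⟩ := hv
      exact p.1.2
    have hb : s.biUnion t = S.biUnion (fun v => G.neighborFinset v) := by
      rw [hS, Finset.image_biUnion]
    have hTsub : S.biUnion (fun v => G.neighborFinset v) ⊆ V₁ := by
      intro u hu
      simp only [mem_biUnion, mem_neighborFinset] at hu
      obtain ⟨v, hv, hadj⟩ := hu
      exact hn21 v (hS2 hv) u hadj
    -- s.card ≤ (M+1) * S.card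
    have hcard1 : s.card ≤ (M + 1) * S.card := by
      refine Finset.card_le_mul_card_image s (M + 1) fun b hb => ?_
      have : (s.filter (fun p => (p.1 : V) = b)).card ≤ (Finset.univ : Finset (Fin (M + 1))).card := by
        refine Finset.card_le_card_of_injOn Prod.snd (fun p _ => Finset.mem_univ _) ?_
        intro p hp q hq hpq
        simp only [Finset.mem_coe, mem_filter] at hp hq
        ext
        · exact hp.2.trans hq.2.symm
        · exact congrArg Fin.val hpq
      simpa using this
    -- counting: c₂ * S.card ≤ c₁ * (biUnion).card
    have hcount : c₂ * S.card ≤ c₁ * (S.biUnion (fun v => G.neighborFinset v)).card := by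
      have := aux S (S.biUnion (fun v => G.neighborFinset v))
        (fun v hv => Finset.subset_biUnion_of_mem (fun v => G.neighborFinset v) hv)
      calc c₂ * S.card = ∑ v ∈ S, G.degree v := by
            rw [Finset.sum_congr rfl (fun v hv => hd2 v (hS2 hv)), Finset.sum_const,
              smul_eq_mul, mul_comm]
        _ ≤ ∑ u ∈ S.biUnion (fun v => G.neighborFinset v), G.degree u := this
        _ = c₁ * (S.biUnion (fun v => G.neighborFinset v)).card := by
            rw [Finset.sum_congr rfl (fun u hu => hd1 u (hTsub hu)), Finset.sum_const,
              smul_eq_mul, mul_comm]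
    have hMS : (M + 1) * S.card ≤ (S.biUnion (fun v => G.neighborFinset v)).card := by
      have h : c₁ * ((M + 1) * S.card) ≤ c₁ * (S.biUnion (fun v => G.neighborFinset v)).card := by
        calc c₁ * ((M + 1) * S.card) = ((M + 1) * c₁) * S.card := by ring
          _ ≤ c₂ * S.card := Nat.mul_le_mul_right _ hc2
          _ ≤ c₁ * (S.biUnion (fun v => G.neighborFinset v)).card := hcount
      exact Nat.le_of_mul_le_mul_left h hc₁
    rw [hb]
    exact hcard1.trans hMS
  obtain ⟨f, hfinj, hf⟩ := (Finset.all_card_le_biUnion_card_iff_exists_injective t).mp hall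
  have hfadj : ∀ p : ↥V₂ × Fin (M + 1), G.Adj (p.1 : V) (f p) := by
    intro p
    have := hf p
    simpa [ht, mem_neighborFinset] using this
  refine ⟨Finset.univ.image (fun p : ↥V₂ × Fin (M + 1) => s((p.1 : V), f p)), ?_, ?_, ?_⟩
  · intro e he
    simp only [mem_image] at he
    obtain ⟨p, _, rfl⟩ := he
    rw [mem_edgeFinset, mem_edgeSet]
    exact hfadj p
  · -- V₁ vertices: at most one edge
    intro v hv
    refine Finset.card_le_one.mpr fun e₁ he₁ e₂ he₂ => ?_
    simp only [mem_filter, mem_image, Finset.mem_univ, true_and] at he₁ he₂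
    obtain ⟨⟨p, rfl⟩, hv1⟩ := he₁
    obtain ⟨⟨q, rfl⟩, hv2⟩ := he₂
    have hvp : v = f p := by
      rcases Sym2.mem_iff.mp hv1 with h | h
      · exact absurd (h ▸ hv) (Finset.disjoint_left.mp hdisj · p.1.2)
      · exact h
    have hvq : v = f q := by
      rcases Sym2.mem_iff.mp hv2 with h | h
      · exact absurd (h ▸ hv) (Finset.disjoint_left.mp hdisj · q.1.2)
      · exact h
    have : p = q := hfinj (hvp ▸ hvq)
    rw [this]
  · -- V₂ vertices: at least M edges
    intro v hv
    have hinj : ∀ i : Fin (M + 1), s(v, f (⟨v, hv⟩, i)) ∈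
        (Finset.univ.image (fun p : ↥V₂ × Fin (M + 1) => s((p.1 : V), f p))).filter
          (fun e => v ∈ e) := by
      intro i
      simp only [mem_filter, mem_image, Finset.mem_univ, true_and]
      exact ⟨⟨(⟨v, hv⟩, i), rfl⟩, Sym2.mem_mk_left _ _⟩
    have hle : (Finset.univ : Finset (Fin (M + 1))).card ≤
        ((Finset.univ.image (fun p : ↥V₂ × Fin (M + 1) => s((p.1 : V), f p))).filter
          (fun e => v ∈ e)).card := by
      refine Finset.card_le_card_of_injOn (fun i => s(v, f (⟨v, hv⟩, i)))
        (fun i _ => hinj i) ?_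
      intro i _ j _ hij
      have : f (⟨v, hv⟩, i) = f (⟨v, hv⟩, j) := by
        have := (Sym2.congr_right).mp hij
        exact this
      have := hfinj this
      exact (Prod.ext_iff.mp this).2
    exact le_trans (Nat.le_succ M) (by simpa using hle)
end
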